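/- arXiv:2411.14779 — 3 statements merged into one kernel-verified Lean document; each statement's English description precedes it below -/
import Mathlib

section
/- Let α₁,…,αₙ be distinct elements of F_q, let v₁,…,vₙ be nonzero elements of F_q, and let C = GRS_k(α,v) = {(v₁f(α₁),…,vₙf(αₙ)) : f ∈ F_q[x], deg f ≤ k-1} with 2k-1 ≤ n. Then the Schur square C^{⋆2} = span{c⋆c' : c,c' ∈ C} (where ⋆ is componentwise product) equals GRS_{2k-1}(α, v⋆v), and in particular dim(C^{⋆2}) = 2k-1. -/
/-! The map `f ↦ (v i * f(α i))ᵢ` sends `f * g` to the Schur product of the images (with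
multipliers multiplied), so `C^{⋆2}` is the image of the span of products of two polynomials of
degree `< k`. That span is all polynomials of degree `< 2k - 1`, since every `X^j` with
`j ≤ 2k - 2` is some `X^a * X^b` with `a, b < k`. A nonzero polynomial of degree `< n` cannot
vanish at `n` distinct points, so for `2k - 1 ≤ n` the map is injective on that space, which gives
the dimension. -/

/-- The generalized Reed–Solomon code of dimension (at most) `k` with evaluation
points `α` and column multipliers `v`: evaluations of polynomials of degree `≤ k-1`. -/
def grs {F : Type*} [Field F] {n : ℕ} (k : ℕ) (α v : Fin n → F) :
    Submodule F (Fin n → F) :=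
  Submodule.span F
    {c | ∃ f : Polynomial F, f.natDegree < k ∧ c = fun i => v i * Polynomial.eval (α i) f}

/-- The Schur square of a linear code: the span of componentwise products of codewords. -/
def schurSq {F : Type*} [Field F] {n : ℕ} (C : Submodule F (Fin n → F)) :
    Submodule F (Fin n → F) :=
  Submodule.span F {x | ∃ c ∈ C, ∃ c' ∈ C, x = c * c'}

open Polynomial

section WeightedEval

variable {R ι : Type*} [CommSemiring R]

noncomputable def weightedEval (α v : ι → R) : R[X] →ₗ[R] ι → R :=
  LinearMap.pi fun i => v i • leval (α i)

@[simp]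
lemma weightedEval_apply (α v : ι → R) (f : R[X]) :
    weightedEval α v f = fun i => v i * f.eval (α i) :=
  rfl

lemma weightedEval_mul_weightedEval (α v w : ι → R) (f g : R[X]) :
    weightedEval α v f * weightedEval α w g = weightedEval α (v * w) (f * g) := by
  ext i
  simp only [weightedEval_apply, Pi.mul_apply, eval_mul]
  ring

end WeightedEval

lemma span_setOf_natDegree_lt {R : Type*} [Semiring R] (k : ℕ) :
    Submodule.span R {f : R[X] | f.natDegree < k} = degreeLT R k := by
  refine le_antisymm (Submodule.span_le.2 fun f hf => ?_) fun f hf => ?_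
  · exact mem_degreeLT.2 (degree_le_natDegree.trans_lt (by exact_mod_cast hf))
  · rcases eq_or_ne f 0 with rfl | hf0
    · exact Submodule.zero_mem _
    · exact Submodule.subset_span ((natDegree_lt_iff_degree_lt hf0).2 (mem_degreeLT.1 hf))

lemma mul_mem_degreeLT_add_sub_one {R : Type*} [Semiring R] {a b : ℕ} {f g : R[X]}
    (hf : f ∈ degreeLT R a) (hg : g ∈ degreeLT R b) : f * g ∈ degreeLT R (a + b - 1) := by
  rcases eq_or_ne (f * g) 0 with hfg | hfg
  · rw [hfg]
    exact Submodule.zero_mem _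
  rw [mem_degreeLT, ← natDegree_lt_iff_degree_lt (left_ne_zero_of_mul hfg)] at hf
  rw [mem_degreeLT, ← natDegree_lt_iff_degree_lt (right_ne_zero_of_mul hfg)] at hg
  rw [mem_degreeLT, ← natDegree_lt_iff_degree_lt hfg]
  have := natDegree_mul_le (p := f) (q := g)
  omega

lemma injective_weightedEval_domRestrict_degreeLT {F ι : Type*} [Field F] [Fintype ι]
    {m : ℕ} (hm : m ≤ Fintype.card ι) {α v : ι → F} (hα : Function.Injective α)
    (hv : ∀ i, v i ≠ 0) : Function.Injective ((weightedEval α v).domRestrict (degreeLT F m)) := by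
  refine (injective_iff_map_eq_zero _).2 fun ⟨f, hf⟩ hf0 => ?_
  have heval : ∀ i ∈ Finset.univ, f.eval (α i) = 0 := fun i _ =>
    (mul_eq_zero.1 (by simpa using congr_fun hf0 i)).resolve_left (hv i)
  have hdeg : f.degree < (Finset.univ : Finset ι).card :=
    (mem_degreeLT.1 hf).trans_le (by exact_mod_cast hm)
  exact Subtype.ext (eq_zero_of_degree_lt_of_eval_index_eq_zero _ hα.injOn hdeg heval)

section GRS

variable {F : Type*} [Field F] {n : ℕ}

lemma grs_eq_map_degreeLT (k : ℕ) (α v : Fin n → F) :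
    grs k α v = (degreeLT F k).map (weightedEval α v) := by
  rw [← span_setOf_natDegree_lt, Submodule.map_span, grs]
  congr 1
  ext c
  simp [eq_comm]

lemma weightedEval_mem_grs {k : ℕ} (α v : Fin n → F) {f : F[X]} (hf : f ∈ degreeLT F k) :
    weightedEval α v f ∈ grs k α v := by
  rw [grs_eq_map_degreeLT]
  exact Submodule.mem_map_of_mem hf

lemma schurSq_grs_le (k : ℕ) (α v : Fin n → F) :
    schurSq (grs k α v) ≤ grs (2 * k - 1) α (v * v) := by
  rw [schurSq, Submodule.span_le, grs_eq_map_degreeLT]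
  rintro _ ⟨_, ⟨f, hf, rfl⟩, _, ⟨g, hg, rfl⟩, rfl⟩
  rw [weightedEval_mul_weightedEval, two_mul]
  exact weightedEval_mem_grs α (v * v) (mul_mem_degreeLT_add_sub_one hf hg)

lemma grs_le_schurSq (k : ℕ) (α v : Fin n → F) :
    grs (2 * k - 1) α (v * v) ≤ schurSq (grs k α v) := by
  classical
  rw [grs_eq_map_degreeLT, degreeLT_eq_span_X_pow, Submodule.map_span_le]
  simp only [Finset.coe_image, Finset.coe_range, Set.mem_image, Set.mem_Iio]
  rintro _ ⟨j, hj, rfl⟩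
  obtain ⟨a, b, ha, hb, rfl⟩ : ∃ a b, a < k ∧ b < k ∧ a + b = j :=
    ⟨min j (k - 1), j - min j (k - 1), by omega, by omega, by omega⟩
  have hX : ∀ c < k, (X : F[X]) ^ c ∈ degreeLT F k := fun c hc =>
    mem_degreeLT.2 ((degree_X_pow_le c).trans_lt (by exact_mod_cast hc))
  rw [pow_add, ← weightedEval_mul_weightedEval]
  exact Submodule.subset_span ⟨_, weightedEval_mem_grs α v (hX a ha),
    _, weightedEval_mem_grs α v (hX b hb), rfl⟩

lemma finrank_grs {m : ℕ} (hm : m ≤ n) {α v : Fin n → F} (hα : Function.Injective α)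
    (hv : ∀ i, v i ≠ 0) : Module.finrank F (grs m α v) = m := by
  rw [grs_eq_map_degreeLT, ← LinearMap.range_domRestrict,
    LinearMap.finrank_range_of_inj (injective_weightedEval_domRestrict_degreeLT
      (by simpa using hm) hα hv),
    (degreeLTEquiv F m).finrank_eq, Module.finrank_fin_fun]

end GRS

theorem schurSq_grs_general {F : Type*} [Field F] {n k : ℕ}
    (hn : 2 * k - 1 ≤ n) (α v : Fin n → F)
    (hα : Function.Injective α) (hv : ∀ i, v i ≠ 0) :
    schurSq (grs k α v) = grs (2 * k - 1) α (v * v) ∧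
      Module.finrank F (schurSq (grs k α v)) = 2 * k - 1 := by
  have hsq : schurSq (grs k α v) = grs (2 * k - 1) α (v * v) :=
    le_antisymm (schurSq_grs_le k α v) (grs_le_schurSq k α v)
  refine ⟨hsq, ?_⟩
  rw [hsq]
  exact finrank_grs hn hα fun i => mul_ne_zero (hv i) (hv i)

theorem schurSq_grs {F : Type*} [Field F] [Fintype F] {n k : ℕ}
    (hk : 1 ≤ k) (hn : 2 * k - 1 ≤ n) (α v : Fin n → F)
    (hα : Function.Injective α) (hv : ∀ i, v i ≠ 0) :
    schurSq (grs k α v) = grs (2 * k - 1) α (v * v) ∧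
      Module.finrank F (schurSq (grs k α v)) = 2 * k - 1 :=
  schurSq_grs_general hn α v hα hv
end

section
/- Let q be a prime power, k ≥ 3, 1 ≤ r ≤ k-1, I = {0,…,k} \ {k-r}, V_I = span_{F_q}{x^i : i ∈ I}, and let T = {α₁,…,αₙ} ⊆ F_q with n ≥ 2k such that e_r(α_{i₁},…,α_{i_k}) ≠ 0 for all 1 ≤ i₁ < ⋯ < i_k ≤ n. Then the evaluation code C(T,I) = {(f(α₁),…,f(αₙ)) : f ∈ V_I} is an [n,k] linear code with minimum distance n-k+1. -/
/-!
A nonzero `f ∈ V_I` has degree at most `k` and no `x^(k-r)` term. If it vanished at `k` of the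
points, it would be a scalar multiple of the product of the corresponding `x - αᵢ`, whose
`x^(k-r)`-coefficient is `±e_r` of those points by Vieta, hence nonzero. So nonzero codewords
vanish at most `k - 1` times: evaluation is injective on the `k`-dimensional space `V_I`, and
the distance is at least `n - k + 1`. It is attained by the Singleton argument: some nonzero
codeword of a `k`-dimensional code vanishes on any `k - 1` prescribed coordinates.
-/

/-- The span of the monomials `x^i`, `i ∈ I`. -/
noncomputable def monomialSpace (F : Type*) [Field F] (I : Finset ℕ) : Submodule F (Polynomial F) :=
  Submodule.span F ((fun i => (Polynomial.X : Polynomial F) ^ i) '' (I : Set ℕ))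

/-- The evaluation code of a space of polynomials at the evaluation points `α`. -/
noncomputable def evalCode {F : Type*} [Field F] {n : ℕ} (α : Fin n → F)
    (V : Submodule F (Polynomial F)) : Submodule F (Fin n → F) :=
  V.map (LinearMap.pi fun i => Polynomial.leval (α i))

open Polynomial Finset

section

variable {F : Type*} [Field F]

theorem finrank_monomialSpace (I : Finset ℕ) : Module.finrank F (monomialSpace F I) = #I := by
  have hli : LinearIndependent F fun i : I => (X : F[X]) ^ (i : ℕ) := by
    simpa only [Function.comp_def, coe_basisMonomials, X_pow_eq_monomial] using
      (basisMonomials F).linearIndependent.comp _ Subtype.val_injective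
  rw [monomialSpace, Set.image_eq_range]
  exact (finrank_span_eq_card hli).trans (Fintype.card_coe I)

theorem coeff_eq_zero_of_mem_monomialSpace {I : Finset ℕ} {f : F[X]}
    (hf : f ∈ monomialSpace F I) {i : ℕ} (hi : i ∉ I) : f.coeff i = 0 := by
  suffices monomialSpace F I ≤ LinearMap.ker (lcoeff F i) from this hf
  refine Submodule.span_le.mpr ?_
  rintro _ ⟨j, hj, rfl⟩
  simp only [SetLike.mem_coe, LinearMap.mem_ker, lcoeff_apply, coeff_X_pow]
  exact if_neg (ne_of_mem_of_not_mem hj hi).symm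

theorem finrank_evalCode_eq {n : ℕ} (α : Fin n → F) {V : Submodule F F[X]}
    (hV : ∀ f ∈ V, (fun i => f.eval (α i)) = 0 → f = 0) :
    Module.finrank F (evalCode α V) = Module.finrank F V := by
  have hinj : LinearMap.ker ((LinearMap.pi fun i => leval (α i)).domRestrict V) = ⊥ :=
    LinearMap.ker_eq_bot'.mpr fun f hf => Subtype.ext (hV f f.2 hf)
  rw [evalCode, ← LinearMap.range_domRestrict,
    LinearMap.finrank_range_of_inj (LinearMap.ker_eq_bot.mp hinj)]

end

theorem coeff_card_sub_ne_zero_of_isRoot {R ι : Type*} [CommRing R] [IsDomain R] {f : R[X]}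
    (hf : f ≠ 0) {s : Finset ι} {v : ι → R} (hv : Set.InjOn v s)
    (hroot : ∀ i ∈ s, f.IsRoot (v i)) (hdeg : f.natDegree ≤ #s) {r : ℕ} (hr : r ≤ #s)
    (hsym : ∑ t ∈ s.powersetCard r, ∏ i ∈ t, v i ≠ 0) : f.coeff (#s - r) ≠ 0 := by
  have hcard : Multiset.card (s.val.map v) = #s := Multiset.card_map _ _
  have hle : s.val.map v ≤ f.roots := by
    refine (Multiset.le_iff_subset (s.nodup_map_iff_injOn.mpr hv)).mpr fun x hx => ?_
    obtain ⟨i, hi, rfl⟩ := Multiset.mem_map.mp hx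
    exact (mem_roots hf).mpr (hroot i hi)
  have hroots : s.val.map v = f.roots :=
    Multiset.eq_of_le_of_card_le hle ((card_roots' f).trans (hcard ▸ hdeg))
  have hdeg' : f.natDegree = #s :=
    le_antisymm hdeg (by rw [← hcard, hroots]; exact card_roots' f)
  rw [coeff_eq_esymm_roots_of_card (by rw [← hroots, hcard, hdeg']) (by omega), ← hroots,
    Finset.esymm_map_val, hdeg', Nat.sub_sub_self hr]
  exact mul_ne_zero
    (mul_ne_zero (leadingCoeff_ne_zero.mpr hf) (pow_ne_zero _ (neg_ne_zero.mpr one_ne_zero))) hsym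

theorem hammingNorm_add_card_filter_eq_zero {ι β : Type*} [Fintype ι] [DecidableEq β] [Zero β]
    (x : ι → β) : hammingNorm x + #{i | x i = 0} = Fintype.card ι := by
  rw [add_comm, hammingNorm, card_filter_add_card_filter_not, card_univ]

theorem exists_mem_ne_zero_hammingNorm_add_finrank_le {K ι : Type*} [Field K] [DecidableEq K]
    [Fintype ι] (C : Submodule K (ι → K)) (hC : 0 < Module.finrank K C) :
    ∃ c ∈ C, c ≠ 0 ∧ hammingNorm c + Module.finrank K C ≤ Fintype.card ι + 1 := by
  have hCle : Module.finrank K C ≤ Fintype.card ι :=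
    (Submodule.finrank_le C).trans (Module.finrank_fintype_fun_eq_card K).le
  obtain ⟨s, -, hs⟩ := exists_subset_card_eq (s := (univ : Finset ι))
    (n := Module.finrank K C - 1) (by rw [card_univ]; omega)
  let restrict : C →ₗ[K] (s → K) :=
    (LinearMap.pi fun i : s => LinearMap.proj (i : ι)) ∘ₗ C.subtype
  have hker : LinearMap.ker restrict ≠ ⊥ := LinearMap.ker_ne_bot_of_finrank_lt <| by
    rw [Module.finrank_fintype_fun_eq_card, Fintype.card_coe]; omega
  obtain ⟨⟨c, hcC⟩, hc, hc0⟩ := Submodule.exists_mem_ne_zero_of_ne_bot hker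
  have hzeros : s ⊆ ({i | c i = 0} : Finset ι) := fun i hi =>
    mem_filter.mpr ⟨mem_univ i, congrFun (LinearMap.mem_ker.mp hc) ⟨i, hi⟩⟩
  refine ⟨c, hcC, fun h => hc0 (Subtype.ext h), ?_⟩
  have := card_le_card hzeros
  have := hammingNorm_add_card_filter_eq_zero c
  omega

section

variable {F : Type*} [Field F] [DecidableEq F] {n k r : ℕ} {α : Fin n → F}

theorem card_filter_eval_eq_zero_lt (hα : Function.Injective α) (hrk : r ≤ k)
    (hsym : ∀ s : Finset (Fin n), #s = k → ∑ t ∈ s.powersetCard r, ∏ i ∈ t, α i ≠ 0)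
    {f : F[X]} (hf : f ∈ monomialSpace F ((range (k + 1)).erase (k - r))) (hf0 : f ≠ 0) :
    #{i | f.eval (α i) = 0} < k := by
  by_contra! h
  obtain ⟨s, hs, rfl⟩ := exists_subset_card_eq h
  have hdeg : f.natDegree ≤ #s := natDegree_le_iff_coeff_eq_zero.mpr fun j hj =>
    coeff_eq_zero_of_mem_monomialSpace hf (by simp only [mem_erase, mem_range]; omega)
  refine coeff_card_sub_ne_zero_of_isRoot hf0 hα.injOn (fun i hi => (mem_filter.mp (hs hi)).2)
    hdeg hrk (hsym s rfl) ?_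
  exact coeff_eq_zero_of_mem_monomialSpace hf (by simp)

theorem add_one_le_hammingNorm_eval_add (hα : Function.Injective α) (hrk : r ≤ k)
    (hsym : ∀ s : Finset (Fin n), #s = k → ∑ t ∈ s.powersetCard r, ∏ i ∈ t, α i ≠ 0)
    {f : F[X]} (hf : f ∈ monomialSpace F ((range (k + 1)).erase (k - r))) (hf0 : f ≠ 0) :
    n + 1 ≤ hammingNorm (fun i => f.eval (α i)) + k := by
  have hzeros := card_filter_eval_eq_zero_lt hα hrk hsym hf hf0
  have hsplit := hammingNorm_add_card_filter_eq_zero fun i => f.eval (α i)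
  rw [Fintype.card_fin] at hsplit
  omega

end

theorem evalCode_MDS_of_elem_sym_ne_zero_general {F : Type*} [Field F]
    [DecidableEq F] {n k r : ℕ} (hr : 1 ≤ r) (hrk : r ≤ k - 1)
    (hkn : 2 * k ≤ n)
    (α : Fin n → F) (hα : Function.Injective α)
    (hsym : ∀ s : Finset (Fin n), s.card = k →
      ∑ t ∈ s.powersetCard r, ∏ i ∈ t, α i ≠ 0) :
    Module.finrank F (evalCode α (monomialSpace F ((Finset.range (k + 1)).erase (k - r)))) = k ∧
      (∀ c ∈ evalCode α (monomialSpace F ((Finset.range (k + 1)).erase (k - r))), c ≠ 0 →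
        n - k + 1 ≤ hammingNorm c) ∧
      (∃ c ∈ evalCode α (monomialSpace F ((Finset.range (k + 1)).erase (k - r))), c ≠ 0 ∧
        hammingNorm c = n - k + 1) := by
  set V := monomialSpace F ((range (k + 1)).erase (k - r))
  have hweight : ∀ f ∈ V, f ≠ 0 → n + 1 ≤ hammingNorm (fun i => f.eval (α i)) + k :=
    fun f hf hf0 => add_one_le_hammingNorm_eval_add hα (by omega) hsym hf hf0
  have hdist : ∀ c ∈ evalCode α V, c ≠ 0 → n + 1 ≤ hammingNorm c + k := by
    rintro _ ⟨f, hf, rfl⟩ hc0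
    exact hweight f hf (by rintro rfl; exact hc0 (map_zero _))
  have hinj : ∀ f ∈ V, (fun i => f.eval (α i)) = 0 → f = 0 := fun f hf hev => by
    by_contra hf0
    have := hweight f hf hf0
    rw [hev, hammingNorm_zero] at this
    omega
  have hrank : Module.finrank F (evalCode α V) = k := by
    rw [finrank_evalCode_eq α hinj, finrank_monomialSpace,
      card_erase_of_mem (mem_range.mpr (by omega)), card_range, Nat.add_sub_cancel]
  refine ⟨hrank, fun c hc hc0 => by have := hdist c hc hc0; omega, ?_⟩
  obtain ⟨c, hc, hc0, hle⟩ := exists_mem_ne_zero_hammingNorm_add_finrank_le (evalCode α V)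
    (by omega)
  have := hdist c hc hc0
  rw [hrank, Fintype.card_fin] at hle
  exact ⟨c, hc, hc0, by omega⟩

theorem evalCode_MDS_of_elem_sym_ne_zero {F : Type*} [Field F] [Fintype F]
    [DecidableEq F] {n k r : ℕ} (hk : 3 ≤ k) (hr : 1 ≤ r) (hrk : r ≤ k - 1)
    (hkn : 2 * k ≤ n)
    (α : Fin n → F) (hα : Function.Injective α)
    (hsym : ∀ s : Finset (Fin n), s.card = k →
      ∑ t ∈ s.powersetCard r, ∏ i ∈ t, α i ≠ 0) :
    Module.finrank F (evalCode α (monomialSpace F ((Finset.range (k + 1)).erase (k - r)))) = k ∧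
      (∀ c ∈ evalCode α (monomialSpace F ((Finset.range (k + 1)).erase (k - r))), c ≠ 0 →
        n - k + 1 ≤ hammingNorm c) ∧
      (∃ c ∈ evalCode α (monomialSpace F ((Finset.range (k + 1)).erase (k - r))), c ≠ 0 ∧
        hammingNorm c = n - k + 1) :=
  evalCode_MDS_of_elem_sym_ne_zero_general hr hrk hkn α hα hsym
end

section
/- Let p be a prime, q = p^m, F_q = F_p(ζ) with basis {1,ζ,…,ζ^{m-1}}, let k ≥ 3 and 1 ≤ r ≤ k-1 with p ∤ C(k,r), and let t = ⌊(m-1)/r⌋. Let α₁,…,αₙ be distinct elements of F_q of the form αᵢ = 1 + Σ_{j=1}^{t} a_{i,j} ζ^j with a_{i,j} ∈ F_p. Then for any 1 ≤ i₁ < ⋯ < i_k ≤ n, the r-th elementary symmetric function e_r(α_{i₁},…,α_{i_k}) is nonzero. -/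
/-!
Write each `αᵢ` as `fᵢ(ζ)` with `fᵢ ∈ 𝔽_p[X]`, `fᵢ(0) = 1` and `deg fᵢ ≤ t`. Then `e_r(α)` is `G(ζ)`
for `G = e_r(f)`, a polynomial with `G(0) = C(k, r)` and `deg G ≤ r t ≤ m - 1`. Since
`1, ζ, …, ζ^{m-1}` is a basis, the coordinate of `G(ζ)` along `1` is `G(0) = C(k, r) ≠ 0` in `𝔽_p`.
-/

open Polynomial

theorem Module.Basis.repr_aeval_eq_coeff {R A : Type*} [CommSemiring R] [Semiring A]
    [Algebra R A] {m : ℕ} (b : Module.Basis (Fin m) R A) {ζ : A}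
    (hb : ∀ j : Fin m, b j = ζ ^ (j : ℕ)) {P : R[X]} (hP : P.natDegree < m) (j : Fin m) :
    b.repr (aeval ζ P) j = P.coeff j := by
  have hsum : aeval ζ P = ∑ i : Fin m, P.coeff i • b i := by
    simp only [hb, aeval_eq_sum_range' hP, Fin.sum_univ_eq_sum_range (fun i => P.coeff i • ζ ^ i)]
  rw [hsum, b.repr_sum_self]

theorem Polynomial.exists_aeval_eq_one_add_sum {R A : Type*} [CommSemiring R] [Semiring A]
    [Algebra R A] (ζ : A) (t : ℕ) (a : ℕ → R) :
    ∃ P : R[X], aeval ζ P = 1 + ∑ j ∈ Finset.Icc 1 t, a j • ζ ^ j ∧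
      P.coeff 0 = 1 ∧ P.natDegree ≤ t := by
  refine ⟨1 + ∑ j ∈ Finset.Icc 1 t, monomial j (a j), ?_, ?_, ?_⟩
  · simp [aeval_monomial, Algebra.smul_def]
  · simp [coeff_monomial]
  · refine (natDegree_add_le _ _).trans (max_le (by simp) ?_)
    refine natDegree_sum_le_of_forall_le _ _ fun j hj => (natDegree_monomial_le _).trans ?_
    exact (Finset.mem_Icc.mp hj).2

section PowersetCardProd

variable {R ι : Type*} [CommSemiring R] (s : Finset ι) (r : ℕ) (f : ι → R[X])

theorem Polynomial.coeff_zero_sum_powersetCard_prod (hf : ∀ i ∈ s, (f i).coeff 0 = 1) :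
    (∑ u ∈ s.powersetCard r, ∏ i ∈ u, f i).coeff 0 = s.card.choose r := by
  have hprod : ∀ u ∈ s.powersetCard r, (∏ i ∈ u, f i).coeff 0 = 1 := fun u hu => by
    rw [coeff_zero_prod]
    exact Finset.prod_eq_one fun i hi => hf i ((Finset.mem_powersetCard.mp hu).1 hi)
  rw [finsetSum_coeff, Finset.sum_congr rfl hprod, Finset.sum_const, Finset.card_powersetCard,
    nsmul_one]

theorem Polynomial.natDegree_sum_powersetCard_prod_le {t : ℕ}
    (hf : ∀ i ∈ s, (f i).natDegree ≤ t) :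
    (∑ u ∈ s.powersetCard r, ∏ i ∈ u, f i).natDegree ≤ r * t := by
  refine natDegree_sum_le_of_forall_le _ _ fun u hu => (natDegree_prod_le _ _).trans ?_
  obtain ⟨hus, hcard⟩ := Finset.mem_powersetCard.mp hu
  calc ∑ i ∈ u, (f i).natDegree ≤ ∑ _i ∈ u, t := Finset.sum_le_sum fun i hi => hf i (hus hi)
    _ = r * t := by rw [Finset.sum_const, hcard, smul_eq_mul]

end PowersetCardProd

theorem elem_sym_ne_zero_of_coord_one_general {p m n k r : ℕ}
    {F : Type*} [Field F] [Algebra (ZMod p) F]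
    (ζ : F) (b : Module.Basis (Fin m) (ZMod p) F) (hb : ∀ j : Fin m, b j = ζ ^ (j : ℕ))
    (hbinom : ¬ p ∣ Nat.choose k r)
    (α : Fin n → F)
    (hform : ∀ i : Fin n, ∃ a : ℕ → ZMod p,
      α i = 1 + ∑ j ∈ Finset.Icc 1 ((m - 1) / r), a j • ζ ^ j) :
    ∀ s : Finset (Fin n), s.card = k →
      ∑ t ∈ s.powersetCard r, ∏ i ∈ t, α i ≠ 0 := by
  intro s hs hzero
  choose f hf_eval hf_coeff hf_deg using fun i =>
    (hform i).elim fun a ha => ha ▸ exists_aeval_eq_one_add_sum ζ ((m - 1) / r) a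
  have hm : 0 < m := Fin.pos_iff_nonempty.mpr b.index_nonempty
  have hdeg : (∑ u ∈ s.powersetCard r, ∏ i ∈ u, f i).natDegree < m :=
    (natDegree_sum_powersetCard_prod_le s r f fun i _ => hf_deg i).trans_lt
      ((Nat.mul_div_le (m - 1) r).trans_lt (by omega))
  have hcoord := b.repr_aeval_eq_coeff hb hdeg ⟨0, hm⟩
  simp only [map_sum, map_prod, hf_eval, hzero, map_zero, Finsupp.coe_zero, Pi.zero_apply] at hcoord
  rw [coeff_zero_sum_powersetCard_prod s r f fun i _ => hf_coeff i, hs, eq_comm,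
    ZMod.natCast_eq_zero_iff] at hcoord
  exact hbinom hcoord

theorem elem_sym_ne_zero_of_coord_one {p m n k r : ℕ} [Fact p.Prime]
    {F : Type*} [Field F] [Fintype F] [Algebra (ZMod p) F]
    (hcard : Fintype.card F = p ^ m)
    (ζ : F) (b : Module.Basis (Fin m) (ZMod p) F) (hb : ∀ j : Fin m, b j = ζ ^ (j : ℕ))
    (hk : 3 ≤ k) (hr : 1 ≤ r) (hrk : r ≤ k - 1)
    (hbinom : ¬ p ∣ Nat.choose k r)
    (α : Fin n → F) (hα : Function.Injective α)
    (hform : ∀ i : Fin n, ∃ a : ℕ → ZMod p,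
      α i = 1 + ∑ j ∈ Finset.Icc 1 ((m - 1) / r), a j • ζ ^ j) :
    ∀ s : Finset (Fin n), s.card = k →
      ∑ t ∈ s.powersetCard r, ∏ i ∈ t, α i ≠ 0 :=
  elem_sym_ne_zero_of_coord_one_general ζ b hb hbinom α hform
end
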